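/- arXiv:1611.03948 — 6 statements merged into one kernel-verified Lean document; each statement's English description precedes it below -/
import Mathlib

section
/- Let Δ and R be two anticommuting square-zero odd operators of order ≤ 2 on a graded-commutative algebra, generating brackets [•] and [⋆] respectively. Then for all homogeneous α, β: Δ[α⋆β] - [Δα⋆β] + (-1)^{|α|}[α⋆Δβ] = -R[α•β] + [Rα•β] - (-1)^{|α|}[α•Rβ]. -/
/-- The odd (BV) bracket generated by an odd operator `D`:
`[α•β] = (-1)^{|α|}D(α∧β) - (-1)^{|α|}Dα∧β - α∧Dβ`, where `m = |α|`
is the degree of the (homogeneous) first argument. -/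
noncomputable def bvBracket {B : Type*} [NonUnitalRing B] [Module ℂ B] (D : B →ₗ[ℂ] B)
    (m : ℤ) (α β : B) : B :=
  ((-1 : ℂ) ^ m) • D (α * β) - ((-1 : ℂ) ^ m) • (D α * β) - α * D β

/-- Mixed compatibility of the two BV brackets generated by anticommuting
square-zero second-order odd operators `Δ` and `R`:
`Δ[α⋆β] - [Δα⋆β] + (-1)^{|α|}[α⋆Δβ] = -R[α•β] + [Rα•β] - (-1)^{|α|}[α•Rβ]`. -/
theorem mixed_bracket_identity
    (B : Type*) [NonUnitalRing B] [Module ℂ B]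
    [SMulCommClass ℂ B B] [IsScalarTower ℂ B B]
    (homo : B → ℤ → Prop)
    (hmul : ∀ α β m n, homo α m → homo β n → homo (α * β) (m + n))
    (hcomm : ∀ α β m n, homo α m → homo β n → α * β = ((-1 : ℂ) ^ (m * n)) • (β * α))
    (Δ : B →ₗ[ℂ] B)
    (hΔdeg : ∀ α n, homo α n → homo (Δ α) (n - 1))
    (hΔ2 : ∀ α, Δ (Δ α) = 0)
    (hΔ7 : ∀ α β γ a b c, homo α a → homo β b → homo γ c →
      Δ (α * β * γ) = Δ (α * β) * γ + ((-1 : ℂ) ^ a) • (α * Δ (β * γ))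
        + ((-1 : ℂ) ^ (b * (a + 1))) • (β * Δ (α * γ)) - Δ α * β * γ
        - ((-1 : ℂ) ^ a) • (α * Δ β * γ) - ((-1 : ℂ) ^ (a + b)) • (α * β * Δ γ))
    (R : B →ₗ[ℂ] B)
    (hRdeg : ∀ α n, homo α n → homo (R α) (n - 1))
    (hR2 : ∀ α, R (R α) = 0)
    (hR7 : ∀ α β γ a b c, homo α a → homo β b → homo γ c →
      R (α * β * γ) = R (α * β) * γ + ((-1 : ℂ) ^ a) • (α * R (β * γ))
        + ((-1 : ℂ) ^ (b * (a + 1))) • (β * R (α * γ)) - R α * β * γ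
        - ((-1 : ℂ) ^ a) • (α * R β * γ) - ((-1 : ℂ) ^ (a + b)) • (α * β * R γ))
    (hΔR : ∀ α, Δ (R α) + R (Δ α) = 0)
    (α β : B) (m n : ℤ) (hα : homo α m) (hβ : homo β n) :
    Δ (bvBracket R m α β) - bvBracket R (m - 1) (Δ α) β
        + ((-1 : ℂ) ^ m) • bvBracket R m α (Δ β)
      = -(R (bvBracket Δ m α β)) + bvBracket Δ (m - 1) (R α) β
          - ((-1 : ℂ) ^ m) • bvBracket Δ m α (R β) := by
  have hRΔ : ∀ x, Δ (R x) = -R (Δ x) := fun x => eq_neg_of_add_eq_zero_left (hΔR x)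
  have hp : ((-1 : ℂ)) ^ (m - 1) = -((-1 : ℂ) ^ m) := by
    rw [zpow_sub_one₀ (by norm_num : (-1 : ℂ) ≠ 0)]
    ring
  have h2 : ((-1 : ℂ) ^ m) * ((-1 : ℂ) ^ m) = 1 := by
    rw [← zpow_add₀ (by norm_num : (-1 : ℂ) ≠ 0), show m + m = 2 * m by ring, zpow_mul]
    norm_num
  simp only [bvBracket, map_sub, map_smul, hRΔ, hp, smul_sub, smul_smul, h2, one_smul, mul_neg, neg_mul]
  module
end

section
/- Let S be an odd derivation of degree related operators with □ = ΔS + SΔ the associated Laplacian, where Δ generates the bracket [•]. Then S[α•β] - [Sα•β] + (-1)^{|α|}[α•Sβ] = (-1)^{|α|}(□(α∧β) - □α∧β - α∧□β). -/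
/-- For a degree `+1` odd derivation `S` with `S² = 0` and the Laplacian
`□ = ΔS + SΔ`, the failure of `S` to be a derivation of the BV bracket measures
the failure of `□` to be a derivation of the product:
`S[α•β] - [Sα•β] + (-1)^{|α|}[α•Sβ] = (-1)^{|α|}(□(α∧β) - □α∧β - α∧□β)`. -/
theorem S_bracket_laplacian
    (B : Type*) [NonUnitalRing B] [Module ℂ B]
    [SMulCommClass ℂ B B] [IsScalarTower ℂ B B]
    (homo : B → ℤ → Prop)
    (hmul : ∀ α β m n, homo α m → homo β n → homo (α * β) (m + n))
    (hcomm : ∀ α β m n, homo α m → homo β n → α * β = ((-1 : ℂ) ^ (m * n)) • (β * α))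
    (Δ : B →ₗ[ℂ] B)
    (hΔdeg : ∀ α n, homo α n → homo (Δ α) (n - 1))
    (hΔ2 : ∀ α, Δ (Δ α) = 0)
    (hΔ7 : ∀ α β γ a b c, homo α a → homo β b → homo γ c →
      Δ (α * β * γ) = Δ (α * β) * γ + ((-1 : ℂ) ^ a) • (α * Δ (β * γ))
        + ((-1 : ℂ) ^ (b * (a + 1))) • (β * Δ (α * γ)) - Δ α * β * γ
        - ((-1 : ℂ) ^ a) • (α * Δ β * γ) - ((-1 : ℂ) ^ (a + b)) • (α * β * Δ γ))
    (S : B →ₗ[ℂ] B)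
    (hSdeg : ∀ α n, homo α n → homo (S α) (n + 1))
    (hS2 : ∀ α, S (S α) = 0)
    (hSder : ∀ α β m n, homo α m → homo β n →
      S (α * β) = S α * β + ((-1 : ℂ) ^ m) • (α * S β))
    (α β : B) (m n : ℤ) (hα : homo α m) (hβ : homo β n) :
    S (bvBracket Δ m α β) - bvBracket Δ (m + 1) (S α) β
        + ((-1 : ℂ) ^ m) • bvBracket Δ m α (S β)
      = ((-1 : ℂ) ^ m) •
          ((Δ (S (α * β)) + S (Δ (α * β)))
            - (Δ (S α) + S (Δ α)) * β - α * (Δ (S β) + S (Δ β))) := by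
  have hm1 : ((-1 : ℂ)) ^ (m + 1) = -((-1 : ℂ) ^ m) := by
    rw [zpow_add_one₀ (by norm_num : (-1 : ℂ) ≠ 0)]; ring
  have hm2 : ((-1 : ℂ)) ^ (m - 1) = -((-1 : ℂ) ^ m) := by
    rw [zpow_sub_one₀ (by norm_num : (-1 : ℂ) ≠ 0)]; ring
  have h1 := hSder α β m n hα hβ
  have h2 := hSder (Δ α) β (m - 1) n (hΔdeg α m hα) hβ
  have h3 := hSder α (Δ β) m (n - 1) hα (hΔdeg β n hβ)
  rw [hm2] at h2
  simp only [bvBracket, map_sub, map_smul, map_add, h1, h2, h3, hm1, neg_smul, smul_add,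
    smul_sub, smul_neg, neg_neg, smul_smul, sub_mul, add_mul, mul_add]
  module
end

section
/- Let φ satisfy the Maurer-Cartan equations ∂̄φ + ½[φ•φ] = 0 and Sφ + ½[φ⋆φ] = 0 in a setting with two compatible dGBV structures, and suppose the mixed anticommutation relations hold (∂̄ anticommutes with R, S anticommutes with Δ, ∂̄S + S∂̄ = 0, □ := ΔS+SΔ = -(∂̄R + R∂̄)). Then the deformed operators ∂̄ + [φ• ] and S + [φ⋆ ] anticommute: (∂̄+[φ• ])(S+[φ⋆ ]) + (S+[φ⋆ ])(∂̄+[φ• ]) = 0. -/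
/-- With two compatible dGBV structures and `φ` of degree 2 satisfying both
Maurer-Cartan equations `∂̄φ = -½Δ(φ∧φ)` and `Sφ = -½R(φ∧φ)`, the deformed
operators `∂̄ + [φ• ]` and `S + [φ⋆ ]` anticommute. -/
theorem deformed_operators_anticommute
    (B : Type*) [NonUnitalRing B] [Module ℂ B]
    [SMulCommClass ℂ B B] [IsScalarTower ℂ B B]
    (homo : B → ℤ → Prop)
    (hmul : ∀ α β m n, homo α m → homo β n → homo (α * β) (m + n))
    (hcomm : ∀ α β m n, homo α m → homo β n → α * β = ((-1 : ℂ) ^ (m * n)) • (β * α))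
    (Δ : B →ₗ[ℂ] B)
    (hΔdeg : ∀ α n, homo α n → homo (Δ α) (n - 1))
    (hΔ2 : ∀ α, Δ (Δ α) = 0)
    (hΔ7 : ∀ α β γ a b c, homo α a → homo β b → homo γ c →
      Δ (α * β * γ) = Δ (α * β) * γ + ((-1 : ℂ) ^ a) • (α * Δ (β * γ))
        + ((-1 : ℂ) ^ (b * (a + 1))) • (β * Δ (α * γ)) - Δ α * β * γ
        - ((-1 : ℂ) ^ a) • (α * Δ β * γ) - ((-1 : ℂ) ^ (a + b)) • (α * β * Δ γ))
    (R : B →ₗ[ℂ] B)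
    (hRdeg : ∀ α n, homo α n → homo (R α) (n - 1))
    (hR2 : ∀ α, R (R α) = 0)
    (hR7 : ∀ α β γ a b c, homo α a → homo β b → homo γ c →
      R (α * β * γ) = R (α * β) * γ + ((-1 : ℂ) ^ a) • (α * R (β * γ))
        + ((-1 : ℂ) ^ (b * (a + 1))) • (β * R (α * γ)) - R α * β * γ
        - ((-1 : ℂ) ^ a) • (α * R β * γ) - ((-1 : ℂ) ^ (a + b)) • (α * β * R γ))
    (hΔR : ∀ α, Δ (R α) + R (Δ α) = 0)
    (D : B →ₗ[ℂ] B)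
    (hDdeg : ∀ α n, homo α n → homo (D α) (n + 1))
    (hD2 : ∀ α, D (D α) = 0)
    (hDder : ∀ α β m n, homo α m → homo β n →
      D (α * β) = D α * β + ((-1 : ℂ) ^ m) • (α * D β))
    (S : B →ₗ[ℂ] B)
    (hSdeg : ∀ α n, homo α n → homo (S α) (n + 1))
    (hS2 : ∀ α, S (S α) = 0)
    (hSder : ∀ α β m n, homo α m → homo β n →
      S (α * β) = S α * β + ((-1 : ℂ) ^ m) • (α * S β))
    (hDS : ∀ α, D (S α) + S (D α) = 0)
    (hDΔ : ∀ α, D (Δ α) + Δ (D α) = 0)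
    (hSR : ∀ α, S (R α) + R (S α) = 0)
    (hbox : ∀ α, Δ (S α) + S (Δ α) = -(D (R α) + R (D α)))
    (φ : B) (hφ : homo φ 2)
    (hφΔ : Δ φ = 0) (hφR : R φ = 0)
    (hφD : D φ = -((1 / 2 : ℂ) • Δ (φ * φ)))
    (hφS : S φ = -((1 / 2 : ℂ) • R (φ * φ)))
    (α : B) (n : ℤ) (hα : homo α n) :
    (D (S α + bvBracket R 2 φ α) + bvBracket Δ 2 φ (S α + bvBracket R 2 φ α))
      + (S (D α + bvBracket Δ 2 φ α) + bvBracket R 2 φ (D α + bvBracket Δ 2 φ α))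
      = 0 := by
  have sgn2 : ((-1 : ℂ) ^ (2:ℤ)) = 1 := by norm_num
  have sgn6 : ((-1 : ℂ) ^ ((2:ℤ) * (2+1))) = 1 := by norm_num
  have sgn4 : ((-1 : ℂ) ^ ((2:ℤ) + 2)) = 1 := by norm_num
  have hRα := hRdeg α n hα
  have hΔα := hΔdeg α n hα
  have e1 := hDS α
  have e2φ := congrArg (fun x => φ * x) (hbox α)
  simp only [mul_add, mul_neg] at e2φ
  have e3 := hbox (φ * α)
  have e4' := hSder φ α 2 n hφ hα
  rw [sgn2, one_smul] at e4'
  have e4 := congrArg (fun x => Δ x) e4'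
  simp only [map_add] at e4
  have e5' := hDder φ α 2 n hφ hα
  rw [sgn2, one_smul] at e5'
  have e5 := congrArg (fun x => R x) e5'
  simp only [map_add] at e5
  have e6 := hDder φ (R α) 2 (n-1) hφ hRα
  rw [sgn2, one_smul] at e6
  have e7 := hSder φ (Δ α) 2 (n-1) hφ hΔα
  rw [sgn2, one_smul] at e7
  have e8a := congrArg (fun x => x * R α) hφD
  simp only [neg_mul, smul_mul_assoc] at e8a
  have e8b := congrArg (fun x => R (x * α)) hφD
  simp only [neg_mul, smul_mul_assoc, map_neg, map_smul] at e8b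
  have e9a := congrArg (fun x => x * Δ α) hφS
  simp only [neg_mul, smul_mul_assoc] at e9a
  have e9b := congrArg (fun x => Δ (x * α)) hφS
  simp only [neg_mul, smul_mul_assoc, map_neg, map_smul] at e9b
  have e10 := hΔR (φ * φ * α)
  have e11' := hR7 φ φ α 2 2 n hφ hφ hα
  rw [sgn2, sgn6, sgn4] at e11'
  simp only [one_smul, hφR, zero_mul, mul_zero, sub_zero] at e11'
  have e11 := congrArg (fun x => Δ x) e11'
  simp only [map_add, map_sub] at e11
  have e12' := hΔ7 φ φ α 2 2 n hφ hφ hα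
  rw [sgn2, sgn6, sgn4] at e12'
  simp only [one_smul, hφΔ, zero_mul, mul_zero, sub_zero] at e12'
  have e12 := congrArg (fun x => R x) e12'
  simp only [map_add, map_sub] at e12
  have e13 := hΔ7 φ φ (R α) 2 2 (n-1) hφ hφ hRα
  rw [sgn2, sgn6, sgn4] at e13
  simp only [one_smul, hφΔ, zero_mul, mul_zero, sub_zero] at e13
  have e14 := hR7 φ φ (Δ α) 2 2 (n-1) hφ hφ hΔα
  rw [sgn2, sgn6, sgn4] at e14
  simp only [one_smul, hφR, zero_mul, mul_zero, sub_zero] at e14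
  have e15 := congrArg (fun x => φ * φ * x) (hΔR α)
  simp only [mul_add, mul_zero] at e15
  have e16 := congrArg (fun x => φ * x) (hΔR (φ * α))
  simp only [mul_add, mul_zero] at e16
  simp only [bvBracket, sgn2, one_smul, hφΔ, hφR, zero_mul, sub_zero, map_add, map_sub,
    mul_add, mul_sub, ← mul_assoc]
  linear_combination (norm := module) e1 - e2φ + e3 - e4 - e5 - e6 - e7 - e16 - e8a - e8b
    - e9a - e9b + (1/2 : ℂ) • e10 - (1/2 : ℂ) • e11 - (1/2 : ℂ) • e12 - (1/2 : ℂ) • e13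
    - (1/2 : ℂ) • e14 + (1/2 : ℂ) • e15
end

section
/- If ψ solves the recursively defined hierarchy ∂̄φ_n = ½ Σ_{i+j=n} [φ_i • φ_j] for n ≥ 2 with ∂̄φ_1 = 0, then the right-hand side ψ_{n+1} = ½Σ_{i+j=n+1}[φ_i•φ_j] is ∂̄-closed: assuming ∂̄ is a derivation of the bracket and φ_k solves the equations for k ≤ n, one has ∂̄ψ_{n+1} = 0. -/
/-- If `φ_1, ..., φ_n` (all of degree 2) solve the Maurer-Cartan hierarchy
`∂̄φ_k = -½ Σ_{i+j=k} [φ_i•φ_j]` (with `∂̄φ_1 = 0`), then the next right-hand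
side is `∂̄`-closed: `Σ_{i+j=n+1} [∂̄φ_i•φ_j] = 0`. -/
theorem hierarchy_rhs_closed
    (B : Type*) [AddCommGroup B] [Module ℂ B]
    (homo : B → ℤ → Prop)
    (br : B →ₗ[ℂ] B →ₗ[ℂ] B)
    (hbrdeg : ∀ α β m n, homo α m → homo β n → homo (br α β) (m + n - 1))
    (hbranti : ∀ α β m n, homo α m → homo β n →
      br β α = -(((-1 : ℂ) ^ ((m + 1) * (n + 1))) • br α β))
    (hjacobi : ∀ α β γ a b c, homo α a → homo β b → homo γ c →
      br α (br β γ) = br (br α β) γ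
        + ((-1 : ℂ) ^ ((a + 1) * (b + 1))) • br β (br α γ))
    (D : B →ₗ[ℂ] B)
    (hDdeg : ∀ α n, homo α n → homo (D α) (n + 1))
    (hD2 : ∀ α, D (D α) = 0)
    (hDbr : ∀ α β m n, homo α m → homo β n →
      D (br α β) = br (D α) β + ((-1 : ℂ) ^ (m + 1)) • br α (D β))
    (n : ℕ) (φ : ℕ → B)
    (hφdeg : ∀ k, homo (φ k) 2)
    (hφ : ∀ k, 1 ≤ k → k ≤ n →
      D (φ k) = -((1 / 2 : ℂ) • ∑ i ∈ Finset.Icc 1 (k - 1), br (φ i) (φ (k - i)))) :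
    ∑ i ∈ Finset.Icc 1 n, br (D (φ i)) (φ (n + 1 - i)) = 0 := by
  classical
  -- pointwise sign lemmas
  have hsym : ∀ a b : ℕ, br (φ a) (φ b) = br (φ b) (φ a) := by
    intro a b
    rw [hbranti (φ a) (φ b) 2 2 (hφdeg a) (hφdeg b)]
    norm_num
  have hanti32 : ∀ (a : ℕ) (X : B), homo X 3 → br X (φ a) = - br (φ a) X := by
    intro a X hX
    rw [hbranti (φ a) X 2 3 (hφdeg a) hX]
    norm_num
  have hjac : ∀ a b c : ℕ, br (br (φ a) (φ b)) (φ c)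
      = br (φ a) (br (φ b) (φ c)) + br (φ b) (br (φ a) (φ c)) := by
    intro a b c
    have h := hjacobi (φ a) (φ b) (φ c) 2 2 2 (hφdeg a) (hφdeg b) (hφdeg c)
    have h9 : ((-1 : ℂ) ^ ((2 + 1) * (2 + 1) : ℤ)) = -1 := by norm_num
    rw [h9] at h
    rw [neg_one_smul] at h
    rw [h]; abel
  -- index set of triples
  set P : Finset (ℕ × ℕ) :=
    (Finset.Icc 1 n ×ˢ Finset.Icc 1 n).filter (fun p => p.1 + p.2 ≤ n) with hP
  have hmemP : ∀ p : ℕ × ℕ, p ∈ P ↔ 1 ≤ p.1 ∧ 1 ≤ p.2 ∧ p.1 + p.2 ≤ n := by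
    intro p
    simp only [hP, Finset.mem_filter, Finset.mem_product, Finset.mem_Icc]
    omega
  set U : B := ∑ p ∈ P, br (φ p.1) (br (φ p.2) (φ (n + 1 - p.1 - p.2))) with hU
  set T : B := ∑ p ∈ P, br (br (φ p.1) (φ p.2)) (φ (n + 1 - p.1 - p.2)) with hT
  -- T = 2U
  have hT2 : T = U + U := by
    rw [hT]
    have : ∀ p ∈ P, br (br (φ p.1) (φ p.2)) (φ (n + 1 - p.1 - p.2))
        = br (φ p.1) (br (φ p.2) (φ (n + 1 - p.1 - p.2)))
          + br (φ p.2) (br (φ p.1) (φ (n + 1 - p.1 - p.2))) := fun p _ => hjac _ _ _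
    rw [Finset.sum_congr rfl this, Finset.sum_add_distrib]
    congr 1
    rw [hU]
    refine Finset.sum_nbij' (fun p => (p.2, p.1)) (fun p => (p.2, p.1)) ?_ ?_ ?_ ?_ ?_
    · intro p hp; rw [hmemP] at hp; rw [hmemP]; dsimp only; omega
    · intro p hp; rw [hmemP] at hp; rw [hmemP]; dsimp only; omega
    · intro p _; rfl
    · intro p _; rfl
    · intro p _
      dsimp only
      have e : n + 1 - p.2 - p.1 = n + 1 - p.1 - p.2 := by omega
      rw [e]
  -- T = -U
  have hT3 : T = -U := by
    rw [hT, hU, ← Finset.sum_neg_distrib]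
    refine Finset.sum_nbij' (fun p => (n + 1 - p.1 - p.2, p.1))
      (fun p => (p.2, n + 1 - p.1 - p.2)) ?_ ?_ ?_ ?_ ?_
    · intro p hp; rw [hmemP] at hp; rw [hmemP]; dsimp only; omega
    · intro p hp; rw [hmemP] at hp; rw [hmemP]; dsimp only; omega
    · intro p hp; rw [hmemP] at hp
      have : n + 1 - (n + 1 - p.1 - p.2) - p.1 = p.2 := by omega
      simp [this]
    · intro p hp; rw [hmemP] at hp
      have : n + 1 - p.2 - (n + 1 - p.1 - p.2) = p.1 := by omega
      simp [this]
    · intro p hp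
      rw [hmemP] at hp
      dsimp only
      rw [hanti32 _ _ (by simpa using hbrdeg (φ p.1) (φ p.2) 2 2 (hφdeg p.1) (hφdeg p.2))]
      have e : n + 1 - (n + 1 - p.1 - p.2) - p.1 = p.2 := by omega
      rw [e]
  have hU0 : U = 0 := by
    have h3 : (3 : ℂ) • U = 0 := by
      have : U + U = -U := by rw [← hT2, hT3]
      have h : U + U + U = 0 := by rw [this]; abel
      calc (3 : ℂ) • U = U + U + U := by
            rw [show (3 : ℂ) = 1 + 1 + 1 by norm_num, add_smul, add_smul, one_smul]
        _ = 0 := h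
    have := congrArg (fun x => (3 : ℂ)⁻¹ • x) h3
    simpa [smul_smul] using this
  have hT0 : T = 0 := by rw [hT3, hU0, neg_zero]
  -- rewrite LHS using hφ
  have hstep : ∀ i ∈ Finset.Icc 1 n,
      br (D (φ i)) (φ (n + 1 - i))
        = -((1 / 2 : ℂ) • ∑ a ∈ Finset.Icc 1 (i - 1),
            br (br (φ a) (φ (i - a))) (φ (n + 1 - i))) := by
    intro i hi
    rw [Finset.mem_Icc] at hi
    rw [hφ i hi.1 hi.2]
    simp [Finset.sum_apply, LinearMap.coe_sum, Finset.smul_sum]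
  rw [Finset.sum_congr rfl hstep]
  have hDS : (∑ i ∈ Finset.Icc 1 n, ∑ a ∈ Finset.Icc 1 (i - 1),
      br (br (φ a) (φ (i - a))) (φ (n + 1 - i))) = T := by
    rw [hT, Finset.sum_sigma']
    refine Finset.sum_nbij' (fun x => (x.2, x.1 - x.2)) (fun p => ⟨p.1 + p.2, p.1⟩) ?_ ?_ ?_ ?_ ?_
    · intro x hx
      simp only [Finset.mem_sigma, Finset.mem_Icc] at hx
      rw [hmemP]; dsimp only; omega
    · intro p hp
      rw [hmemP] at hp
      simp only [Finset.mem_sigma, Finset.mem_Icc]; omega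
    · intro x hx
      simp only [Finset.mem_sigma, Finset.mem_Icc] at hx
      ext <;> simp <;> omega
    · intro p hp
      rw [hmemP] at hp
      ext <;> simp <;> omega
    · intro x hx
      simp only [Finset.mem_sigma, Finset.mem_Icc] at hx
      dsimp only
      have e1 : x.1 - x.2 = x.1 - x.2 := rfl
      have e2 : n + 1 - x.2 - (x.1 - x.2) = n + 1 - x.1 := by omega
      rw [e2]
  have final : ∑ x ∈ Finset.Icc 1 n, -((1 / 2 : ℂ) • ∑ a ∈ Finset.Icc 1 (x - 1), br (br (φ a) (φ (x - a))) (φ (n + 1 - x))) = -((1 / 2 : ℂ) • ∑ x ∈ Finset.Icc 1 n, ∑ a ∈ Finset.Icc 1 (x - 1), br (br (φ a) (φ (x - a))) (φ (n + 1 - x))) := by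
    rw [Finset.smul_sum, ← Finset.sum_neg_distrib]
  rw [final, hDS, hT0, smul_zero, neg_zero]
end

section
/- Let P be a degree-preserving linear operator, φ_1 of degree 2 with associated solution φ = Σφ_n of the Maurer-Cartan hierarchy, and define for α of arbitrary degree the sequence α_0 = α, α_n = Σ_{k=1}^n P(φ_k ∧ α_{n-k}). If each α_m for m < n satisfies ∂̄α_m + Σ_{k=1}^m [φ_k•α_{m-k}] = 0 whenever P satisfies ∂̄P(γ) = γ on the relevant classes, then Σ_{k=1}^n [φ_k•α_{n-k}] is ∂̄-closed: ∂̄(Σ_{k=1}^n [φ_k•α_{n-k}]) = 0. -/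
/-- Deformation of states: if the `φ_k` (degree 2) solve the Maurer-Cartan
hierarchy `∂̄φ_k + ½Σ_{i+j=k}[φ_i•φ_j] = 0` for all `k ≥ 1`, and the `α_m`
(of common degree `d`) satisfy `∂̄α_m + Σ_{k=1}^m [φ_k•α_{m-k}] = 0` for all
`m < n`, then the next combination is `∂̄`-closed:
`∂̄(Σ_{k=1}^n [φ_k•α_{n-k}]) = 0`. -/
theorem states_hierarchy_closed
    (B : Type*) [AddCommGroup B] [Module ℂ B]
    (homo : B → ℤ → Prop)
    (br : B →ₗ[ℂ] B →ₗ[ℂ] B)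
    (hbrdeg : ∀ α β m n, homo α m → homo β n → homo (br α β) (m + n - 1))
    (hbranti : ∀ α β m n, homo α m → homo β n →
      br β α = -(((-1 : ℂ) ^ ((m + 1) * (n + 1))) • br α β))
    (hjacobi : ∀ α β γ a b c, homo α a → homo β b → homo γ c →
      br α (br β γ) = br (br α β) γ
        + ((-1 : ℂ) ^ ((a + 1) * (b + 1))) • br β (br α γ))
    (D : B →ₗ[ℂ] B)
    (hDdeg : ∀ α n, homo α n → homo (D α) (n + 1))
    (hD2 : ∀ α, D (D α) = 0)
    (hDbr : ∀ α β m n, homo α m → homo β n →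
      D (br α β) = br (D α) β + ((-1 : ℂ) ^ (m + 1)) • br α (D β))
    (φ : ℕ → B)
    (hφdeg : ∀ k, homo (φ k) 2)
    (hφ : ∀ k, 1 ≤ k →
      D (φ k) + (1 / 2 : ℂ) • ∑ i ∈ Finset.Icc 1 (k - 1), br (φ i) (φ (k - i)) = 0)
    (d : ℤ) (a : ℕ → B)
    (hadeg : ∀ m, homo (a m) d)
    (n : ℕ)
    (ha : ∀ m, m < n →
      D (a m) + ∑ k ∈ Finset.Icc 1 m, br (φ k) (a (m - k)) = 0) :
    D (∑ k ∈ Finset.Icc 1 n, br (φ k) (a (n - k))) = 0 := by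
  have hφ' : ∀ k, 1 ≤ k →
      D (φ k) = -((1 / 2 : ℂ) • ∑ i ∈ Finset.Icc 1 (k - 1), br (φ i) (φ (k - i))) := by
    intro k hk
    have h := hφ k hk
    rw [eq_neg_of_add_eq_zero_left h]
  have ha' : ∀ m, m < n →
      D (a m) = -∑ k ∈ Finset.Icc 1 m, br (φ k) (a (m - k)) := by
    intro m hm
    have h := ha m hm
    rw [eq_neg_of_add_eq_zero_left h]
  -- step: expand each term
  have step : ∀ k ∈ Finset.Icc 1 n, D (br (φ k) (a (n - k)))
      = (-((1 / 2 : ℂ) • ∑ i ∈ Finset.Icc 1 (k - 1), br (br (φ i) (φ (k - i))) (a (n - k))))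
        + ∑ l ∈ Finset.Icc 1 (n - k), br (φ k) (br (φ l) (a (n - k - l))) := by
    intro k hk
    simp only [Finset.mem_Icc] at hk
    rw [hDbr _ _ 2 d (hφdeg k) (hadeg _), hφ' k hk.1, ha' (n - k) (by omega)]
    have : ((-1 : ℂ) ^ ((2 : ℤ) + 1)) = -1 := by norm_num
    rw [this]
    simp [Finset.smul_sum, map_sum, map_smul, map_neg]
  rw [map_sum, Finset.sum_congr rfl step, Finset.sum_add_distrib]
  -- sigma index sets
  set P := (Finset.Icc 1 n).sigma (fun k => Finset.Icc 1 (n - k)) with hP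
  have hBsum : (∑ k ∈ Finset.Icc 1 n, ∑ l ∈ Finset.Icc 1 (n - k),
      br (φ k) (br (φ l) (a (n - k - l))))
      = ∑ p ∈ P, br (φ p.1) (br (φ p.2) (a (n - p.1 - p.2))) := by
    rw [Finset.sum_sigma']
  -- swap symmetry
  have hswap : (∑ p ∈ P, br (φ p.1) (br (φ p.2) (a (n - p.1 - p.2))))
      = ∑ p ∈ P, br (φ p.2) (br (φ p.1) (a (n - p.1 - p.2))) := by
    apply Finset.sum_nbij' (fun p => (⟨p.2, p.1⟩ : Σ _ : ℕ, ℕ))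
      (fun p => (⟨p.2, p.1⟩ : Σ _ : ℕ, ℕ))
    · intro p hp
      simp only [hP, Finset.mem_sigma, Finset.mem_Icc] at hp ⊢
      omega
    · intro p hp
      simp only [hP, Finset.mem_sigma, Finset.mem_Icc] at hp ⊢
      omega
    · intro p _; rfl
    · intro p _; rfl
    · intro p hp
      simp only [hP, Finset.mem_sigma, Finset.mem_Icc] at hp
      have : n - p.2 - p.1 = n - p.1 - p.2 := by omega
      rw [this]
  -- Jacobi identity per point
  have hjac : ∀ p ∈ P, br (φ p.1) (br (φ p.2) (a (n - p.1 - p.2)))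
      + br (φ p.2) (br (φ p.1) (a (n - p.1 - p.2)))
      = br (br (φ p.1) (φ p.2)) (a (n - p.1 - p.2)) := by
    intro p _
    have h := hjacobi (φ p.1) (φ p.2) (a (n - p.1 - p.2)) 2 2 d
      (hφdeg _) (hφdeg _) (hadeg _)
    have hs : ((-1 : ℂ) ^ (((2 : ℤ) + 1) * ((2 : ℤ) + 1))) = -1 := by norm_num
    rw [hs, neg_one_smul] at h
    rw [h]; abel
  -- twice Bsum
  have h2B : (2 : ℂ) • (∑ p ∈ P, br (φ p.1) (br (φ p.2) (a (n - p.1 - p.2))))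
      = ∑ p ∈ P, br (br (φ p.1) (φ p.2)) (a (n - p.1 - p.2)) := by
    rw [two_smul]
    nth_rewrite 2 [hswap]
    rw [← Finset.sum_add_distrib]
    exact Finset.sum_congr rfl hjac
  -- reindex A
  have hA : (∑ k ∈ Finset.Icc 1 n, ∑ i ∈ Finset.Icc 1 (k - 1),
      br (br (φ i) (φ (k - i))) (a (n - k)))
      = ∑ p ∈ P, br (br (φ p.1) (φ p.2)) (a (n - p.1 - p.2)) := by
    rw [Finset.sum_sigma']
    apply Finset.sum_nbij' (fun p => (⟨p.2, p.1 - p.2⟩ : Σ _ : ℕ, ℕ))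
      (fun p => (⟨p.1 + p.2, p.1⟩ : Σ _ : ℕ, ℕ))
    · intro p hp
      simp only [hP, Finset.mem_sigma, Finset.mem_Icc] at hp ⊢
      omega
    · intro p hp
      simp only [hP, Finset.mem_sigma, Finset.mem_Icc] at hp ⊢
      omega
    · intro p hp
      simp only [Finset.mem_sigma, Finset.mem_Icc] at hp
      have h1 : p.2 + (p.1 - p.2) = p.1 := by omega
      ext <;> simp [h1]
    · intro p hp
      simp only [hP, Finset.mem_sigma, Finset.mem_Icc] at hp
      have h1 : p.1 + p.2 - p.1 = p.2 := by omega
      ext <;> simp [h1]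
    · intro p hp
      simp only [Finset.mem_sigma, Finset.mem_Icc] at hp
      have h1 : p.1 - p.2 = p.1 - p.2 := rfl
      have h2 : n - p.2 - (p.1 - p.2) = n - p.1 := by omega
      rw [h2]
  -- conclude
  rw [hBsum]
  have hhalf : (∑ p ∈ P, br (φ p.1) (br (φ p.2) (a (n - p.1 - p.2))))
      = (1 / 2 : ℂ) • ∑ p ∈ P, br (br (φ p.1) (φ p.2)) (a (n - p.1 - p.2)) := by
    rw [← h2B, smul_smul]; norm_num
  rw [hhalf, ← hA]
  rw [Finset.sum_neg_distrib, ← Finset.smul_sum]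
  exact neg_add_cancel _
end

section
/- On a graded-commutative algebra with second-order square-zero operators Δ and R generating brackets [•] and [⋆], and φ of degree 2 satisfying Δφ = Rφ = 0, ∂̄φ = -½Δ(φ∧φ), Sφ = -½R(φ∧φ), the identity [Sφ•α] + [∂̄φ⋆α] + [φ⋆[φ•α]] + [φ•[φ⋆α]] = 0 holds for all homogeneous α. -/
/-- For `φ` of degree 2 with `Δφ = Rφ = 0`, setting `∂̄φ := -½Δ(φ∧φ)` (degree 3)
and `Sφ := -½R(φ∧φ)` (degree 3), one has
`[Sφ•α] + [∂̄φ⋆α] + [φ⋆[φ•α]] + [φ•[φ⋆α]] = 0` for all homogeneous `α`. -/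
theorem four_term_identity
    (B : Type*) [NonUnitalRing B] [Module ℂ B]
    [SMulCommClass ℂ B B] [IsScalarTower ℂ B B]
    (homo : B → ℤ → Prop)
    (hmul : ∀ α β m n, homo α m → homo β n → homo (α * β) (m + n))
    (hcomm : ∀ α β m n, homo α m → homo β n → α * β = ((-1 : ℂ) ^ (m * n)) • (β * α))
    (Δ : B →ₗ[ℂ] B)
    (hΔdeg : ∀ α n, homo α n → homo (Δ α) (n - 1))
    (hΔ2 : ∀ α, Δ (Δ α) = 0)
    (hΔ7 : ∀ α β γ a b c, homo α a → homo β b → homo γ c →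
      Δ (α * β * γ) = Δ (α * β) * γ + ((-1 : ℂ) ^ a) • (α * Δ (β * γ))
        + ((-1 : ℂ) ^ (b * (a + 1))) • (β * Δ (α * γ)) - Δ α * β * γ
        - ((-1 : ℂ) ^ a) • (α * Δ β * γ) - ((-1 : ℂ) ^ (a + b)) • (α * β * Δ γ))
    (R : B →ₗ[ℂ] B)
    (hRdeg : ∀ α n, homo α n → homo (R α) (n - 1))
    (hR2 : ∀ α, R (R α) = 0)
    (hR7 : ∀ α β γ a b c, homo α a → homo β b → homo γ c →
      R (α * β * γ) = R (α * β) * γ + ((-1 : ℂ) ^ a) • (α * R (β * γ))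
        + ((-1 : ℂ) ^ (b * (a + 1))) • (β * R (α * γ)) - R α * β * γ
        - ((-1 : ℂ) ^ a) • (α * R β * γ) - ((-1 : ℂ) ^ (a + b)) • (α * β * R γ))
    (hΔR : ∀ α, Δ (R α) + R (Δ α) = 0)
    (φ : B) (hφ : homo φ 2)
    (hφΔ : Δ φ = 0) (hφR : R φ = 0)
    (α : B) (n : ℤ) (hα : homo α n) :
    bvBracket Δ 3 (-((1 / 2 : ℂ) • R (φ * φ))) α
      + bvBracket R 3 (-((1 / 2 : ℂ) • Δ (φ * φ))) α
      + bvBracket R 2 φ (bvBracket Δ 2 φ α)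
      + bvBracket Δ 2 φ (bvBracket R 2 φ α) = 0 := by

  have hΔα : homo (Δ α) (n - 1) := hΔdeg α n hα
  have hRα : homo (R α) (n - 1) := hRdeg α n hα
  have e1 := hΔ7 φ φ α 2 2 n hφ hφ hα
  have e2 := hΔ7 φ φ (R α) 2 2 (n - 1) hφ hφ hRα
  have e3 := hR7 φ φ α 2 2 n hφ hφ hα
  have e4 := hR7 φ φ (Δ α) 2 2 (n - 1) hφ hφ hΔα
  simp only [hφΔ, hφR, zero_mul, mul_zero, smul_zero, sub_zero] at e1 e2 e3 e4
  norm_num at e1 e2 e3 e4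
  have e1R := congrArg R e1
  have e3Δ := congrArg Δ e3
  simp only [map_add, map_sub, map_smul] at e1R e3Δ
  have c1 := hΔR α
  have c2 := hΔR (φ * α)
  have c3 := hΔR (φ * φ)
  have c4 := hΔR (φ * φ * α)
  have c1' := congrArg (fun x => φ * (φ * x)) c1
  have c2' := congrArg (fun x => φ * x) c2
  have c3' := congrArg (fun x => x * α) c3
  simp only [mul_add, add_mul, mul_zero, zero_mul] at c1' c2' c3'
  simp only [bvBracket, map_neg, map_smul, map_sub, map_add, map_zero, hφΔ, hφR,
    zero_mul, mul_zero, smul_zero, sub_zero, zero_sub, neg_mul, smul_mul_assoc,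
    mul_neg, mul_smul_comm, mul_sub, sub_mul, mul_assoc] at *
  norm_num
  linear_combination (norm := module) (-(1/2 : ℂ)) • e1R + (-(1/2 : ℂ)) • e3Δ
    + (-(1/2 : ℂ)) • e2 + (-(1/2 : ℂ)) • e4 + ((1/2 : ℂ)) • c1' + (-1 : ℂ) • c2'
    + ((1/2 : ℂ)) • c4 + (-(1/2 : ℂ)) • c3'
end
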